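/- Let κ be an uncountable cardinal with κ^{<κ} = κ and let ℱ be a normal filter on κ (i.e., κ-complete and closed under diagonal intersections, containing all final segments). Then Gal(ℱ, κ, κ⁺) holds: any family ⟨A_α ∣ α < κ⁺⟩ ⊆ ℱ has a subfamily of size κ whose intersection belongs to ℱ. -/

import Mathlib

open Cardinal

/-- Galvin's property for a (set-represented) filter on sets of ordinals. -/
def GalSet (W : Set (Set Ordinal.{0})) (κ lam : Cardinal.{0}) : Prop :=
  ∀ (ι : Type) (A : ι → Set Ordinal.{0}), #ι = lam → (∀ i, A i ∈ W) →
    ∃ I : Set ι, #(↥I) = κ ∧ (⋂ i ∈ I, A i) ∈ W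

/-- `F` is a normal (κ-complete, diagonal-intersection closed, containing all
final segments) proper filter on the ordinals below `κ`. -/
def IsNormalFilterOn (κ : Cardinal.{0}) (F : Set (Set Ordinal.{0})) : Prop :=
  (∀ X ∈ F, X ⊆ Set.Iio κ.ord) ∧
  Set.Iio κ.ord ∈ F ∧
  ∅ ∉ F ∧
  (∀ X ∈ F, ∀ Y : Set Ordinal.{0}, X ⊆ Y → Y ⊆ Set.Iio κ.ord → Y ∈ F) ∧
  (∀ S : Set (Set Ordinal.{0}), S ⊆ F → #(↥S) < Cardinal.lift.{1} κ → S.Nonempty → ⋂₀ S ∈ F) ∧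
  (∀ α < κ.ord, {β | α < β ∧ β < κ.ord} ∈ F) ∧
  (∀ A : Ordinal.{0} → Set Ordinal.{0}, (∀ α < κ.ord, A α ∈ F) →
    {β | β < κ.ord ∧ ∀ α < β, β ∈ A α} ∈ F)

/-!
Call `i` good if for every `β < κ` more than `κ` indices `j` satisfy
`A j ∩ [0, β] = A i ∩ [0, β]`. For each `β` there are at most `2 ^ |β| ≤ κ ^< κ = κ` such traces,
so at most `κ · κ = κ` indices are bad and, as there are `κ⁺` indices, some `i₀` is good.
Recursively choose distinct `f β` (`β < κ`) agreeing with `i₀` on `[0, β]`. Then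
`A i₀ ∩ Δ_β A (f β)` lies in the filter and is contained in `⋂_β A (f β)`: a point `γ` lies in
`A (f β)` for `β < γ` by the diagonal intersection and for `β ≥ γ` by agreement with `A i₀`.
-/

universe u v w

open Set

namespace Cardinal

theorem mk_setOf_mk_fiber_le {α : Type u} {β : Type v} (f : α → β) {c : Cardinal.{u}}
    (hc : ℵ₀ ≤ c) (hβ : lift.{u} #β ≤ lift.{v} c) :
    #{a | #{a' | f a' = f a} ≤ c} ≤ c := by
  set S := {a | #{a' | f a' = f a} ≤ c}
  have hfiber : ∀ b, lift.{v} #((fun a : S => f a) ⁻¹' {b}) ≤ lift.{v} c := by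
    intro b
    rcases ((fun a : S => f a) ⁻¹' {b}).eq_empty_or_nonempty with h | ⟨a, rfl⟩
    · simp [h]
    refine lift_le.mpr ((mk_le_of_injective (f := fun a' : (fun a : S => f a) ⁻¹' {f a} =>
      (⟨a'.1.1, a'.2⟩ : {a' | f a' = f a})) ?_).trans a.2)
    intro a₁ a₂ h
    have h_val := congrArg Subtype.val h
    exact Subtype.ext (Subtype.ext h_val)
  refine lift_le.{v}.mp ((lift_mk_le_lift_mk_mul_of_lift_mk_preimage_le _ hfiber).trans ?_)
  calc lift.{u} #β * lift.{v} c ≤ lift.{v} c * lift.{v} c := mul_le_mul_left hβ _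
    _ = lift.{v} c := mul_eq_self (aleph0_le_lift.mpr hc)

theorem exists_forall_lt_mk_fiber {ι : Type u} {T : Type w} {X : T → Type v}
    (f : ∀ t, ι → X t) {c : Cardinal.{u}} (hc : ℵ₀ ≤ c) (hT : lift.{u} #T ≤ lift.{w} c)
    (hX : ∀ t, lift.{u} #(X t) ≤ lift.{v} c) (hι : c < #ι) :
    ∃ i, ∀ t, c < #{j | f t j = f t i} := by
  by_contra! h
  have hcover : (Set.univ : Set ι) ⊆ ⋃ t, {i | #{j | f t j = f t i} ≤ c} := fun i _ =>
    mem_iUnion.mpr (h i)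
  have hsmall : ⨆ t, lift.{w} #{i | #{j | f t j = f t i} ≤ c} ≤ lift.{w} c :=
    ciSup_le' fun t => lift_le.mpr (mk_setOf_mk_fiber_le (f t) hc (hX t))
  have hcover_le : lift.{w} #ι ≤ lift.{w} c := by
    calc lift.{w} #ι = lift.{w} #(Set.univ : Set ι) := by rw [mk_univ]
      _ ≤ lift.{w} #(⋃ t, {i | #{j | f t j = f t i} ≤ c}) :=
        lift_le.mpr (mk_le_mk_of_subset hcover)
      _ ≤ lift.{u} #T * ⨆ t, lift.{w} #{i | #{j | f t j = f t i} ≤ c} := mk_iUnion_le_lift _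
      _ ≤ lift.{w} c * lift.{w} c := mul_le_mul' hT hsmall
      _ = lift.{w} c := mul_eq_self (aleph0_le_lift.mpr hc)
  exact (lift_le.mp hcover_le).not_gt hι

theorem mk_set_Iio_le_lift_powerlt {κ : Cardinal.{u}} (h2 : 2 ≤ κ) {β : Ordinal.{u}}
    (hβ : β < κ.ord) : #(Set (Iio β)) ≤ lift.{u + 1} (κ ^< κ) := by
  rw [mk_set, mk_Iio_ordinal, ← lift_two_power, lift_le]
  exact (power_le_power_right h2).trans (le_powerlt κ (lt_ord.mp hβ))

end Cardinal

namespace Ordinal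

theorem exists_injOn_mem_of_card_lt_mk {ι : Type u} [Nonempty ι] (o : Ordinal.{u})
    (C : Ordinal.{u} → Set ι) (hC : ∀ β < o, β.card < #(C β)) :
    ∃ f : Ordinal.{u} → ι, (∀ β < o, f β ∈ C β) ∧ InjOn f (Iio o) := by
  set f : Ordinal.{u} → ι := lt_wf.fix fun β ih =>
    Classical.epsilon fun j => j ∈ C β ∧ ∀ γ (h : γ < β), ih γ h ≠ j
  have hf : ∀ β < o, f β ∈ C β ∧ ∀ γ < β, f γ ≠ f β := by
    intro β hβ
    rw [show f β = _ from lt_wf.fix_eq _ β]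
    apply Classical.epsilon_spec (p := fun j => j ∈ C β ∧ ∀ γ < β, f γ ≠ j)
    have himage : #(f '' Iio β) < #(C β) := by
      refine lt_of_le_of_lt ?_ (hC β hβ)
      have := mk_image_le_lift (f := f) (s := Iio β)
      rwa [Cardinal.mk_Iio_ordinal, Cardinal.lift_id'.{u, u + 1}, Cardinal.lift_le] at this
    obtain ⟨j, hjC, hjf⟩ : (C β \ f '' Iio β).Nonempty := by
      by_contra! h
      exact (mk_le_mk_of_subset (sdiff_eq_empty.mp h)).not_gt himage
    exact ⟨j, hjC, fun γ hγ hfγ => hjf ⟨γ, hγ, hfγ⟩⟩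
  refine ⟨f, fun β hβ => (hf β hβ).1, fun β hβ γ hγ hβγ => ?_⟩
  rcases lt_trichotomy β γ with h | h | h
  · exact absurd hβγ ((hf γ hγ).2 β h)
  · exact h
  · exact absurd hβγ.symm ((hf β hβ).2 γ h)

end Ordinal

theorem Set.inter_diag_subset_biInter {α : Type u} [LinearOrder α] {B : Set α} {A : α → Set α}
    {o : α} (h : ∀ β < o, ∀ γ ≤ β, γ ∈ B → γ ∈ A β) :
    B ∩ {γ | γ < o ∧ ∀ β < γ, γ ∈ A β} ⊆ ⋂ β ∈ Iio o, A β := by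
  rintro γ ⟨hγB, -, hγA⟩
  refine mem_iInter₂.mpr fun β hβ => ?_
  rcases lt_or_ge β γ with hlt | hle
  · exact hγA β hlt
  · exact h β hβ γ hle hγB

theorem IsNormalFilterOn.inter_mem {κ : Cardinal.{0}} {F : Set (Set Ordinal.{0})}
    (hF : IsNormalFilterOn κ F) (hκ : ℵ₀ ≤ κ) {X Y : Set Ordinal.{0}} (hX : X ∈ F) (hY : Y ∈ F) :
    X ∩ Y ∈ F := by
  have hpair : #({X, Y} : Set (Set Ordinal.{0})) < lift.{1} κ := by
    refine lt_of_lt_of_le ?_ (aleph0_le_lift.mpr hκ)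
    exact ((finite_singleton Y).insert X).lt_aleph0
  rw [← sInter_pair]
  exact hF.2.2.2.2.1 _ (pair_subset hX hY) hpair (insert_nonempty _ _)

/-- Galvin's theorem: if `κ^{<κ} = κ` and `F` is a normal filter on `κ`,
then `Gal(F, κ, κ⁺)` holds. -/
theorem stmt6 (κ : Cardinal.{0}) (hunc : ℵ₀ < κ) (hpow : κ ^< κ = κ)
    (F : Set (Set Ordinal.{0})) (hF : IsNormalFilterOn κ F) :
    GalSet F κ (Order.succ κ) := by
  intro ι A hι hA
  have hκ : ℵ₀ ≤ κ := hunc.le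
  have hlim : Order.IsSuccLimit κ.ord := isSuccLimit_ord hκ
  have ⟨hF_sub, _, _, hF_mono, _, _, hF_diag⟩ := hF
  -- `trace β i` is `A i ∩ [0, β]`, seen as a subset of `β + 1`.
  let trace (β : Ordinal) (i : ι) : Set (Iio (Order.succ β)) := (↑) ⁻¹' A i
  obtain ⟨i₀, hi₀⟩ : ∃ i₀, ∀ β : Iio κ.ord, κ < #{j | trace β j = trace β i₀} := by
    refine exists_forall_lt_mk_fiber (fun β : Iio κ.ord => trace β) hκ (by simp [mk_Iio_ordinal])
      (fun β => ?_) ?_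
    · simpa [hpow] using mk_set_Iio_le_lift_powerlt (ofNat_le_aleph0.trans hκ) (hlim.succ_lt β.2)
    · exact hι ▸ Order.lt_succ κ
  have : Nonempty ι := ⟨i₀⟩
  obtain ⟨f, hf, hf_inj⟩ := Ordinal.exists_injOn_mem_of_card_lt_mk κ.ord
    (fun β => {j | trace β j = trace β i₀}) fun β hβ => (lt_ord.mp hβ).trans (hi₀ ⟨β, hβ⟩)
  refine ⟨f '' Iio κ.ord, ?_, ?_⟩
  · have := mk_image_eq_of_injOn_lift f _ hf_inj
    rwa [mk_Iio_ordinal, card_ord, lift_uzero, lift_inj] at this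
  · rw [biInter_image]
    refine hF_mono _ (hF.inter_mem hκ (hA i₀) (hF_diag _ fun β _ => hA (f β))) _
      (inter_diag_subset_biInter fun β hβ γ hγ hγA => ?_)
      ((biInter_subset_of_mem (t := fun β => A (f β)) (x := 0) hlim.pos).trans
        (hF_sub _ (hA (f 0))))
    have := congrArg (⟨γ, Order.lt_succ_of_le hγ⟩ ∈ ·) (hf β hβ)
    simpa [trace, hγA] using this
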